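/- Let Ω be a bounded domain, u : [0,ε₀) × closure(Ω) → R bounded continuous with M = sup u, m ≤ inf u, and ρ : closure(Ω) → R continuous with ρ ≤ 0. For 0 < ε < ε₀ define h(t) = 0 for t < ε and h(t) = C(t−ε) for t ≥ ε, with C = 1 + (M − m + max(−ρ))/(ε₀ − ε). Then the function ũ defined as max{u(t,z) − h(t), m + ρ(z)} on [0,ε₀) × closure(Ω) and as m + ρ(z) on [ε₀,T) × closure(Ω) is continuous on [0,T) × closure(Ω), satisfies ũ ≤ u on [0,ε₀) × closure(Ω), and ũ = u on [0,ε) × closure(Ω). -/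

import Mathlib

/-!
Beyond `t = ε` the ramp `h` grows with slope `C`, chosen so that `h` overtakes
`M - m + sup (-ρ)` strictly before `t = ε₀`. Near `t = ε₀` this forces
`u - h ≤ M - h < m - sup (-ρ) ≤ m + ρ`, so the maximum already equals the barrier `m + ρ`
and both pieces agree on a whole strip `(b, ε₀) × closure Ω`; gluing along such a strip is
continuous. Since `h ≥ 0` and `m + ρ ≤ m ≤ u`, the maximum stays below `u`, and for `t < ε`
it equals `u`.
-/

open Filter Topology Set

theorem continuous_ite_lt_zero_mul_sub (ε C : ℝ) :
    Continuous fun t : ℝ => if t < ε then 0 else C * (t - ε) := by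
  refine Continuous.if (fun t ht => ?_) continuous_const (by fun_prop)
  have ht : t = ε := frontier_lt_subset_eq continuous_id continuous_const ht
  rw [ht, sub_self, mul_zero]

theorem ite_lt_zero_mul_sub_nonneg {ε C : ℝ} (hC : 0 ≤ C) (t : ℝ) :
    0 ≤ if t < ε then 0 else C * (t - ε) := by
  split_ifs with ht
  · exact le_rfl
  · exact mul_nonneg hC (sub_nonneg.2 (not_lt.1 ht))

theorem eventually_lt_ite_lt_zero_mul_sub {ε ε₀ K : ℝ} (h : ε < ε₀) :
    ∀ᶠ t in 𝓝 ε₀, K < if t < ε then 0 else (1 + K / (ε₀ - ε)) * (t - ε) := by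
  refine (continuous_ite_lt_zero_mul_sub ε _).continuousAt.eventually_const_lt ?_
  dsimp only
  rw [if_neg h.not_gt, add_mul, one_mul, div_mul_cancel₀ _ (sub_pos.2 h).ne']
  linarith

theorem ContinuousOn.if_fst_lt {α X Y : Type*} [LinearOrder α] [TopologicalSpace α]
    [OrderTopology α] [DenselyOrdered α] [NoMinOrder α] [TopologicalSpace X] [TopologicalSpace Y]
    {s : Set (α × X)} {a : α} {F G : α × X → Y}
    (hF : ContinuousOn F (s ∩ {q | q.1 < a})) (hG : ContinuousOn G s)
    (hFG : ∀ᶠ t in 𝓝[<] a, ∀ x, (t, x) ∈ s → F (t, x) = G (t, x)) :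
    ContinuousOn (fun q => if q.1 < a then F q else G q) s := by
  obtain ⟨b, hba, hb⟩ := mem_nhdsLT_iff_exists_Ioo_subset.1 hFG
  obtain ⟨c, hbc, hca⟩ := exists_between hba
  have hFG' : ∀ q ∈ s, c ≤ q.1 → q.1 < a → F q = G q := fun q hq hcq hqa =>
    hb ⟨hbc.trans_le hcq, hqa⟩ q.2 hq
  refine ContinuousOn.congr (f := fun q => if q.1 ≤ c then F q else G q) ?_ fun q hq => ?_
  · refine ContinuousOn.if (fun q ⟨hq, hfr⟩ => ?_) (hF.mono ?_) (hG.mono inter_subset_left)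
    · have hqc : q.1 = c := frontier_le_subset_eq continuous_fst continuous_const hfr
      exact hFG' q hq hqc.ge (hqc ▸ hca)
    · rw [closure_le_eq continuous_fst continuous_const]
      exact fun q ⟨hq, hqc⟩ => ⟨hq, lt_of_le_of_lt hqc hca⟩
  · dsimp only
    by_cases hqc : q.1 ≤ c
    · rw [if_pos hqc, if_pos (hqc.trans_lt hca)]
    · rw [if_neg hqc]
      split_ifs with hqa
      · exact hFG' q hq (not_le.1 hqc).le hqa
      · rfl

theorem glue_subsolution_extension_general
    {n : ℕ} (T ε ε₀ : ℝ) (hεε₀ : ε < ε₀)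
    (Ω : Set (EuclideanSpace ℂ (Fin n)))
    (hΩbdd : Bornology.IsBounded Ω)
    (u : ℝ × EuclideanSpace ℂ (Fin n) → ℝ)
    (hu : ContinuousOn u (Set.Ico 0 ε₀ ×ˢ closure Ω))
    (M m : ℝ)
    (hM : ∀ q ∈ Set.Ico 0 ε₀ ×ˢ closure Ω, u q ≤ M)
    (hm : ∀ q ∈ Set.Ico 0 ε₀ ×ˢ closure Ω, m ≤ u q)
    (ρ : EuclideanSpace ℂ (Fin n) → ℝ)
    (hρ : ContinuousOn ρ (closure Ω)) (hρneg : ∀ z ∈ closure Ω, ρ z ≤ 0) :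
    (ContinuousOn
        (fun q : ℝ × EuclideanSpace ℂ (Fin n) =>
          if q.1 < ε₀ then
            max (u q - (if q.1 < ε then 0 else
              (1 + (M - m + sSup ((fun z => -ρ z) '' closure Ω)) / (ε₀ - ε)) * (q.1 - ε)))
              (m + ρ q.2)
          else m + ρ q.2)
        (Set.Ico 0 T ×ˢ closure Ω)) ∧
    (∀ q ∈ Set.Ico 0 ε₀ ×ˢ closure Ω,
        (if q.1 < ε₀ then
            max (u q - (if q.1 < ε then 0 else
              (1 + (M - m + sSup ((fun z => -ρ z) '' closure Ω)) / (ε₀ - ε)) * (q.1 - ε)))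
              (m + ρ q.2)
          else m + ρ q.2) ≤ u q) ∧
    (∀ q ∈ Set.Ico 0 ε ×ˢ closure Ω,
        (if q.1 < ε₀ then
            max (u q - (if q.1 < ε then 0 else
              (1 + (M - m + sSup ((fun z => -ρ z) '' closure Ω)) / (ε₀ - ε)) * (q.1 - ε)))
              (m + ρ q.2)
          else m + ρ q.2) = u q) := by
  set S := sSup ((fun z => -ρ z) '' closure Ω)
  have hS : ∀ z ∈ closure Ω, -ρ z ≤ S := fun z hz =>
    le_csSup (hΩbdd.isCompact_closure.bddAbove_image hρ.neg) (mem_image_of_mem _ hz)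
  have hbarrier : ∀ q ∈ Ico 0 ε₀ ×ˢ closure Ω, m + ρ q.2 ≤ u q := fun q hq => by
    linarith [hm q hq, hρneg q.2 hq.2]
  have hbarrier_cont : ContinuousOn (fun q : ℝ × EuclideanSpace ℂ (Fin n) => m + ρ q.2)
      (Ici 0 ×ˢ closure Ω) :=
    continuousOn_const.add (hρ.comp continuousOn_snd fun q hq => hq.2)
  refine ⟨?_, fun q hq => ?_, fun q hq => ?_⟩
  · have hu_lt : ContinuousOn u ((Ico 0 T ×ˢ closure Ω) ∩ {q | q.1 < ε₀}) :=
      hu.mono fun q ⟨⟨⟨ht0, _⟩, hz⟩, htε₀⟩ => ⟨⟨ht0, htε₀⟩, hz⟩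
    have hramp : Continuous fun q : ℝ × EuclideanSpace ℂ (Fin n) =>
        if q.1 < ε then 0 else (1 + (M - m + S) / (ε₀ - ε)) * (q.1 - ε) :=
      (continuous_ite_lt_zero_mul_sub ε _).comp continuous_fst
    refine ContinuousOn.if_fst_lt (ContinuousOn.sup (hu_lt.sub hramp.continuousOn)
      (hbarrier_cont.mono fun q hq => ⟨hq.1.1.1, hq.1.2⟩))
      (hbarrier_cont.mono fun q hq => ⟨hq.1.1, hq.2⟩) ?_
    filter_upwards [self_mem_nhdsWithin,
      nhdsWithin_le_nhds (eventually_lt_ite_lt_zero_mul_sub (K := M - m + S) hεε₀)]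
      with t htε₀ hlarge
    rintro z ⟨⟨ht0, -⟩, hz⟩
    exact max_eq_right (by linarith [hM (t, z) ⟨⟨ht0, htε₀⟩, hz⟩, hS z hz])
  · have hK : 0 ≤ M - m + S := by linarith [hm q hq, hM q hq, hρneg q.2 hq.2, hS q.2 hq.2]
    have hC : 0 ≤ 1 + (M - m + S) / (ε₀ - ε) := by
      have := div_nonneg hK (sub_pos.2 hεε₀).le
      linarith
    rw [if_pos hq.1.2]
    exact max_le (sub_le_self _ (ite_lt_zero_mul_sub_nonneg hC q.1)) (hbarrier q hq)
  · have hq₀ : q ∈ Ico 0 ε₀ ×ˢ closure Ω := ⟨⟨hq.1.1, hq.1.2.trans hεε₀⟩, hq.2⟩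
    rw [if_pos hq₀.1.2, if_pos hq.1.2, sub_zero]
    exact max_eq_left (hbarrier q hq₀)

/-- Extension of a subsolution-type function from a short time interval: with
`C = 1 + (M - m + max (-ρ)) / (ε₀ - ε)` and `h t = 0` for `t < ε`, `h t = C (t - ε)`
for `t ≥ ε`, the function `ũ` equal to `max (u (t,z) - h t) (m + ρ z)` for `t < ε₀`
and to `m + ρ z` for `t ≥ ε₀` is continuous on `[0,T) × closure Ω`, satisfies `ũ ≤ u`
on `[0,ε₀) × closure Ω` and `ũ = u` on `[0,ε) × closure Ω`. -/
theorem glue_subsolution_extension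
    {n : ℕ} (T ε ε₀ : ℝ) (hε : 0 < ε) (hεε₀ : ε < ε₀) (hε₀T : ε₀ < T)
    (Ω : Set (EuclideanSpace ℂ (Fin n)))
    (hΩopen : IsOpen Ω) (hΩbdd : Bornology.IsBounded Ω) (hΩne : Ω.Nonempty)
    (u : ℝ × EuclideanSpace ℂ (Fin n) → ℝ)
    (hu : ContinuousOn u (Set.Ico 0 ε₀ ×ˢ closure Ω))
    (M m : ℝ)
    (hM : ∀ q ∈ Set.Ico 0 ε₀ ×ˢ closure Ω, u q ≤ M)
    (hm : ∀ q ∈ Set.Ico 0 ε₀ ×ˢ closure Ω, m ≤ u q)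
    (ρ : EuclideanSpace ℂ (Fin n) → ℝ)
    (hρ : ContinuousOn ρ (closure Ω)) (hρneg : ∀ z ∈ closure Ω, ρ z ≤ 0) :
    (ContinuousOn
        (fun q : ℝ × EuclideanSpace ℂ (Fin n) =>
          if q.1 < ε₀ then
            max (u q - (if q.1 < ε then 0 else
              (1 + (M - m + sSup ((fun z => -ρ z) '' closure Ω)) / (ε₀ - ε)) * (q.1 - ε)))
              (m + ρ q.2)
          else m + ρ q.2)
        (Set.Ico 0 T ×ˢ closure Ω)) ∧
    (∀ q ∈ Set.Ico 0 ε₀ ×ˢ closure Ω,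
        (if q.1 < ε₀ then
            max (u q - (if q.1 < ε then 0 else
              (1 + (M - m + sSup ((fun z => -ρ z) '' closure Ω)) / (ε₀ - ε)) * (q.1 - ε)))
              (m + ρ q.2)
          else m + ρ q.2) ≤ u q) ∧
    (∀ q ∈ Set.Ico 0 ε ×ˢ closure Ω,
        (if q.1 < ε₀ then
            max (u q - (if q.1 < ε then 0 else
              (1 + (M - m + sSup ((fun z => -ρ z) '' closure Ω)) / (ε₀ - ε)) * (q.1 - ε)))
              (m + ρ q.2)
          else m + ρ q.2) = u q) :=
  glue_subsolution_extension_general T ε ε₀ hεε₀ Ω hΩbdd u hu M m hM hm ρ hρ hρneg
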